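/- arXiv:1902.02770 — 6 statements merged into one kernel-verified Lean document; each statement's English description precedes it below -/
import Mathlib

section
/- Let π be a probability distribution with full support on a finite set Ω, let J be an Ω-valued random variable, and let A be an event with positive probability. Then the chi-squared (L²(π)) distance of the conditional law of J given A from π satisfies ‖P(J ∈ · | A) − π‖²_{2,π} ≤ (‖P(J ∈ ·) − π‖²_{2,π} + 1)/P(A)² − 1, where ‖σ‖²_{2,π} = Σ_x π(x)(σ(x)/π(x) − 1)² for a signed measure σ with σ(Ω)=1 (here applied to probability measures minus π). -/
open MeasureTheory

noncomputable section

/-- The chi-squared (L²(π)) distance of a (sub)probability vector `ν` from `π`: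
`‖ν − π‖²_{2,π} = Σ_x π(x) (ν(x)/π(x) − 1)²`. -/
def chiSq {Ω : Type*} [Fintype Ω] (π ν : Ω → ℝ) : ℝ :=
  ∑ x, π x * (ν x / π x - 1) ^ 2

/-!
Expanding the square, `‖ν − π‖²_{2,π} + 1 = Σ_x ν(x)²/π(x)` for every probability vector `ν`.
Conditioning on `A` divides the law of `J` by `P(A)` but only after shrinking it pointwise,
`P(J = x, A) ≤ P(J = x)`, so this second moment grows by at most the factor `P(A)⁻²`.
-/

section ChiSq

variable {Ω : Type*} [Fintype Ω] {π ν : Ω → ℝ}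

theorem chiSq_add_one (hπ : ∀ x, π x ≠ 0) (hπsum : ∑ x, π x = 1) (hν : ∑ x, ν x = 1) :
    chiSq π ν + 1 = ∑ x, ν x ^ 2 / π x := by
  have hterm : ∀ x, π x * (ν x / π x - 1) ^ 2 = ν x ^ 2 / π x - 2 * ν x + π x := by
    intro x
    field_simp [hπ x]
    ring
  simp only [chiSq, hterm, Finset.sum_add_distrib, Finset.sum_sub_distrib, ← Finset.mul_sum,
    hν, hπsum]
  ring

theorem chiSq_div_le_of_le {ν' : Ω → ℝ} {p : ℝ} (hπ : ∀ x, 0 < π x) (hπsum : ∑ x, π x = 1)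
    (hν : ∑ x, ν x = 1) (hν' : ∑ x, ν' x = p) (hp : p ≠ 0) (h0 : 0 ≤ ν') (hle : ν' ≤ ν) :
    chiSq π (fun x => ν' x / p) ≤ (chiSq π ν + 1) / p ^ 2 - 1 := by
  have hπ₀ : ∀ x, π x ≠ 0 := fun x => (hπ x).ne'
  have hν'p : ∑ x, ν' x / p = 1 := by rw [← Finset.sum_div, hν', div_self hp]
  rw [le_sub_iff_add_le, chiSq_add_one hπ₀ hπsum hν'p, chiSq_add_one hπ₀ hπsum hν,
    Finset.sum_div]
  refine Finset.sum_le_sum fun x _ => ?_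
  rw [div_pow, div_right_comm]
  gcongr
  exacts [(hπ x).le, h0 x, hle x]

end ChiSq

theorem sum_measureReal_inter_preimage_singleton {Θ β : Type*} [MeasurableSpace Θ]
    [Fintype β] [MeasurableSpace β] [MeasurableSingletonClass β] (μ : Measure Θ)
    [IsFiniteMeasure μ] {J : Θ → β} (hJ : Measurable J) (A : Set Θ) :
    ∑ x, μ.real (A ∩ J ⁻¹' {x}) = μ.real A := by
  have hfiber : ∀ x, MeasurableSet (J ⁻¹' {x}) := fun x => hJ (measurableSet_singleton x)
  calc ∑ x, μ.real (A ∩ J ⁻¹' {x}) = ∑ x, (μ.restrict A).real (J ⁻¹' {x}) := by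
        simp only [measureReal_restrict_apply (hfiber _), Set.inter_comm]
    _ = μ.real A := by
        rw [sum_measureReal_preimage_singleton _ fun x _ => hfiber x, Finset.coe_univ,
          Set.preimage_univ, measureReal_restrict_apply_univ]

theorem stmt0_general {Ω : Type*} [Fintype Ω] [MeasurableSpace Ω] [MeasurableSingletonClass Ω]
    {Θ : Type*} [MeasurableSpace Θ] (μ : Measure Θ) [IsProbabilityMeasure μ]
    (π : Ω → ℝ) (hπpos : ∀ x, 0 < π x) (hπsum : ∑ x, π x = 1)
    (J : Θ → Ω) (hJ : Measurable J)
    (A : Set Θ) (hA : 0 < (μ A).toReal) :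
    chiSq π (fun x => (μ (A ∩ J ⁻¹' {x})).toReal / (μ A).toReal)
      ≤ (chiSq π (fun x => (μ (J ⁻¹' {x})).toReal) + 1) / (μ A).toReal ^ 2 - 1 := by
  have hlaw : ∑ x, μ.real (J ⁻¹' {x}) = 1 := by
    simpa using sum_measureReal_inter_preimage_singleton μ hJ Set.univ
  exact chiSq_div_le_of_le hπpos hπsum hlaw (sum_measureReal_inter_preimage_singleton μ hJ A)
    hA.ne' (fun x => measureReal_nonneg)
    (fun x => measureReal_mono Set.inter_subset_right)

/-- Let `π` be a fully supported probability distribution on a finite set `Ω`,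
`J` an `Ω`-valued random variable on a probability space `(Θ, μ)`, and `A` an event of positive
probability. Then
`‖P(J ∈ · | A) − π‖²_{2,π} ≤ (‖P(J ∈ ·) − π‖²_{2,π} + 1)/P(A)² − 1`. -/
theorem stmt0 {Ω : Type*} [Fintype Ω] [MeasurableSpace Ω] [MeasurableSingletonClass Ω]
    {Θ : Type*} [MeasurableSpace Θ] (μ : Measure Θ) [IsProbabilityMeasure μ]
    (π : Ω → ℝ) (hπpos : ∀ x, 0 < π x) (hπsum : ∑ x, π x = 1)
    (J : Θ → Ω) (hJ : Measurable J)
    (A : Set Θ) (hAmeas : MeasurableSet A) (hA : 0 < (μ A).toReal) :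
    chiSq π (fun x => (μ (A ∩ J ⁻¹' {x})).toReal / (μ A).toReal)
      ≤ (chiSq π (fun x => (μ (J ⁻¹' {x})).toReal) + 1) / (μ A).toReal ^ 2 - 1 :=
  stmt0_general μ π hπpos hπsum J hJ A hA

end
end

section
/- Let π be a fully supported probability measure on a finite set Ω, let A ⊊ Ω be nonempty with π(A) > 0, and let δ ∈ (0,1). Among all probability measures ν on Ω with ν(A) ≥ π(A) + δ·π(Aᶜ), the minimum of ‖ν − π‖²_{2,π} is attained by ν_{A,δ} := δ·π_A + (1−δ)·π (where π_A is π conditioned on A), and this minimum equals δ²·π(Aᶜ)/π(A). -/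
noncomputable section

open Finset

/-!
Writing `‖ν − π‖²_{2,π} = Σ (ν − π)²/π` and splitting the sum over `A` and `Aᶜ`, Cauchy–Schwarz
bounds each half below by `d²/π(A)` and `d²/π(Aᶜ)`, where `d = ν(A) − π(A)` is the mass moved
into `A` (and out of `Aᶜ`). The constraint forces `d ≥ δ·π(Aᶜ)`, which gives the bound
`δ²·π(Aᶜ)/π(A)`. Equality in Cauchy–Schwarz holds exactly when `ν/π` is constant on `A` and on
`Aᶜ`, as it is for `ν_{A,δ}`, which moreover moves exactly `d = δ·π(Aᶜ)`.
-/

section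

variable {Ω : Type*} [Fintype Ω] {π ν : Ω → ℝ}

theorem chiSq_eq_sum_sq_div (hπ : ∀ x, π x ≠ 0) :
    chiSq π ν = ∑ x, (ν x - π x) ^ 2 / π x := by
  refine sum_congr rfl fun x _ => ?_
  have := hπ x
  field_simp

theorem chiSq_eq_of_ratio_eq [DecidableEq Ω] (hπ : ∀ x, π x ≠ 0) (A : Finset Ω) {c c' : ℝ}
    (hA : ∀ x ∈ A, ν x = c * π x) (hAc : ∀ x ∉ A, ν x = c' * π x) :
    chiSq π ν = (c - 1) ^ 2 * ∑ x ∈ A, π x + (c' - 1) ^ 2 * ∑ x ∈ Aᶜ, π x := by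
  have hterm (x : Ω) (k : ℝ) (hx : ν x = k * π x) :
      π x * (ν x / π x - 1) ^ 2 = (k - 1) ^ 2 * π x := by
    rw [hx, mul_div_cancel_right₀ _ (hπ x), mul_comm]
  rw [chiSq, ← sum_add_sum_compl A, mul_sum, mul_sum]
  congr 1 <;> refine sum_congr rfl fun x hx => hterm x _ ?_
  · exact hA x hx
  · exact hAc x (mem_compl.mp hx)

theorem sq_div_add_sq_div_le_chiSq [DecidableEq Ω] (hπ : ∀ x, 0 < π x)
    (hmass : ∑ x, ν x = ∑ x, π x) (A : Finset Ω) :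
    (∑ x ∈ A, ν x - ∑ x ∈ A, π x) ^ 2 / ∑ x ∈ A, π x
      + (∑ x ∈ A, ν x - ∑ x ∈ A, π x) ^ 2 / ∑ x ∈ Aᶜ, π x ≤ chiSq π ν := by
  have hin : ∑ x ∈ A, (ν x - π x) = ∑ x ∈ A, ν x - ∑ x ∈ A, π x := sum_sub_distrib ..
  have hout : ∑ x ∈ Aᶜ, (ν x - π x) = -(∑ x ∈ A, ν x - ∑ x ∈ A, π x) := by
    rw [← sum_add_sum_compl A ν, ← sum_add_sum_compl A π] at hmass
    rw [sum_sub_distrib]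
    linarith
  calc _ = (∑ x ∈ A, (ν x - π x)) ^ 2 / ∑ x ∈ A, π x
        + (∑ x ∈ Aᶜ, (ν x - π x)) ^ 2 / ∑ x ∈ Aᶜ, π x := by rw [hin, hout, neg_sq]
    _ ≤ ∑ x ∈ A, (ν x - π x) ^ 2 / π x + ∑ x ∈ Aᶜ, (ν x - π x) ^ 2 / π x :=
        add_le_add (sq_sum_div_le_sum_sq_div _ _ fun x _ => hπ x)
          (sq_sum_div_le_sum_sq_div _ _ fun x _ => hπ x)
    _ = chiSq π ν := by rw [sum_add_sum_compl, chiSq_eq_sum_sq_div fun x => (hπ x).ne']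

end

theorem sq_mul_div_le_sq_div_add_sq_div {a b δ d : ℝ} (ha : 0 < a) (hb : 0 ≤ b) (hab : a + b = 1)
    (hδ : 0 ≤ δ) (hd : δ * b ≤ d) :
    δ ^ 2 * b / a ≤ d ^ 2 / a + d ^ 2 / b := by
  have hδb : (δ * b) ^ 2 / b = δ ^ 2 * b := by
    rcases hb.eq_or_lt with rfl | hb
    · simp
    · field_simp
  calc δ ^ 2 * b / a = (δ * b) ^ 2 / a + (δ * b) ^ 2 / b := by
        rw [hδb, ← sub_eq_iff_eq_add', eq_comm]
        field_simp
        linear_combination δ ^ 2 * b * hab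
    _ ≤ d ^ 2 / a + d ^ 2 / b := by
        have : (δ * b) ^ 2 ≤ d ^ 2 := pow_le_pow_left₀ (by positivity) hd 2
        gcongr

theorem stmt2_general {Ω : Type*} [Fintype Ω] [DecidableEq Ω]
    (π : Ω → ℝ) (hπpos : ∀ x, 0 < π x) (hπsum : ∑ x, π x = 1)
    (A : Finset Ω) (hAne : A.Nonempty)
    (δ : ℝ) (hδ0 : 0 < δ) :
    -- the minimizer `ν_{A,δ} = δ·π_A + (1−δ)·π`
    (let νAδ : Ω → ℝ :=
      fun x => δ * (if x ∈ A then π x / (∑ y ∈ A, π y) else 0) + (1 - δ) * π x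
    -- it belongs to the constraint class and attains the value `δ²·π(Aᶜ)/π(A)` …
    ((∑ x ∈ A, νAδ x) ≥ (∑ x ∈ A, π x) + δ * (∑ x ∈ Aᶜ, π x)) ∧
      chiSq π νAδ = δ ^ 2 * (∑ x ∈ Aᶜ, π x) / (∑ x ∈ A, π x)) ∧
    -- … which is a lower bound for every probability vector in the class.
    (∀ ν : Ω → ℝ, (∀ x, 0 ≤ ν x) → (∑ x, ν x = 1) →
      (∑ x ∈ A, ν x) ≥ (∑ x ∈ A, π x) + δ * (∑ x ∈ Aᶜ, π x) →
      δ ^ 2 * (∑ x ∈ Aᶜ, π x) / (∑ x ∈ A, π x) ≤ chiSq π ν) := by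
  dsimp only
  set a := ∑ x ∈ A, π x with a_def
  set b := ∑ x ∈ Aᶜ, π x with b_def
  have hab : a + b = 1 := by rw [sum_add_sum_compl, hπsum]
  have ha : 0 < a := sum_pos (fun x _ => hπpos x) hAne
  have hb : 0 ≤ b := sum_nonneg fun x _ => (hπpos x).le
  refine ⟨⟨?_, ?_⟩, fun ν _ hνsum hνA => ?_⟩
  · have hcond : ∑ x ∈ A, (if x ∈ A then π x / a else 0) = 1 := by
      rw [sum_congr rfl fun x hx => if_pos hx, ← sum_div, div_self ha.ne']
    rw [sum_add_distrib, ← mul_sum, ← mul_sum, hcond, ← a_def]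
    linear_combination δ * hab
  · rw [chiSq_eq_of_ratio_eq (fun x => (hπpos x).ne') A (c := δ / a + (1 - δ)) (c' := 1 - δ)
      (fun x hx => by simp only [if_pos hx]; ring) (fun x hx => by simp only [if_neg hx]; ring),
      ← a_def, ← b_def, eq_sub_of_add_eq' hab]
    field_simp
    ring
  · exact (sq_mul_div_le_sq_div_add_sq_div ha hb hab hδ0.le (by linarith)).trans
      (sq_div_add_sq_div_le_chiSq hπpos (by rw [hνsum, hπsum]) A)

/-- Let `π` be fully supported on finite `Ω`, `∅ ≠ A ⊊ Ω` and `δ ∈ (0,1)`.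
Among all probability vectors `ν` with `ν(A) ≥ π(A) + δ·π(Aᶜ)`, the chi-squared distance from
`π` is minimized by `ν_{A,δ} = δ·π_A + (1−δ)·π`, and the minimum equals `δ²·π(Aᶜ)/π(A)`. -/
theorem stmt2 {Ω : Type*} [Fintype Ω] [DecidableEq Ω]
    (π : Ω → ℝ) (hπpos : ∀ x, 0 < π x) (hπsum : ∑ x, π x = 1)
    (A : Finset Ω) (hAne : A.Nonempty) (hAproper : A ≠ Finset.univ)
    (δ : ℝ) (hδ0 : 0 < δ) (hδ1 : δ < 1) :
    -- the minimizer `ν_{A,δ} = δ·π_A + (1−δ)·π`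
    (let νAδ : Ω → ℝ :=
      fun x => δ * (if x ∈ A then π x / (∑ y ∈ A, π y) else 0) + (1 - δ) * π x
    -- it belongs to the constraint class and attains the value `δ²·π(Aᶜ)/π(A)` …
    ((∑ x ∈ A, νAδ x) ≥ (∑ x ∈ A, π x) + δ * (∑ x ∈ Aᶜ, π x)) ∧
      chiSq π νAδ = δ ^ 2 * (∑ x ∈ Aᶜ, π x) / (∑ x ∈ A, π x)) ∧
    -- … which is a lower bound for every probability vector in the class.
    (∀ ν : Ω → ℝ, (∀ x, 0 ≤ ν x) → (∑ x, ν x = 1) →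
      (∑ x ∈ A, ν x) ≥ (∑ x ∈ A, π x) + δ * (∑ x ∈ Aᶜ, π x) →
      δ ^ 2 * (∑ x ∈ Aᶜ, π x) / (∑ x ∈ A, π x) ≤ chiSq π ν) :=
  stmt2_general π hπpos hπsum A hAne δ hδ0
end
end

section
/- Let P be an irreducible transition matrix on a finite state space Ω, reversible with respect to π, with Dirichlet form E(h,h) = (1/2)Σ_{x,y} π(x)P(x,y)(h(x)−h(y))². For any nonzero nonnegative function u: Ω → [0,∞), let M = Var_π(u)/(4‖u‖₁) and û = (u − M)₊. Then the support of û has π-measure at most 4‖u‖₁²/Var_π(u), E(u,u) ≥ E(û,û), and Var_π(û) ≥ Var_π(u)/2. Consequently, E(u,u)/Var_π(u) ≥ (1/2)·Λ(4‖u‖₁²/Var_π(u)), where Λ(ε) = min{E(h,h) : Var_π(h)=1, π(supp(h)) ≤ ε}. -/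
noncomputable section

variable {Ω : Type*} [Fintype Ω]

/-- Dirichlet form `E(h,h) = (1/2) Σ_{x,y} π(x) P(x,y) (h(x) − h(y))²`. -/
def dirForm (π : Ω → ℝ) (P : Matrix Ω Ω ℝ) (h : Ω → ℝ) : ℝ :=
  (1 / 2) * ∑ x, ∑ y, π x * P x y * (h x - h y) ^ 2

/-- `Var_π(h) = E_π[(h − E_π h)²]`. -/
def varPi (π : Ω → ℝ) (h : Ω → ℝ) : ℝ :=
  ∑ x, π x * (h x - ∑ y, π y * h y) ^ 2

/-- `‖u‖₁ = E_π[|u|]`. -/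
def l1Norm (π : Ω → ℝ) (u : Ω → ℝ) : ℝ := ∑ x, π x * |u x|

/-- `π(supp h)`. -/
def suppMass (π : Ω → ℝ) (h : Ω → ℝ) : ℝ := ∑ x, if h x ≠ 0 then π x else 0

/-- The spectral profile `Λ(ε) = inf{E(h,h) : Var_π(h)=1, π(supp h) ≤ ε}`. -/
def specProfile (π : Ω → ℝ) (P : Matrix Ω Ω ℝ) (ε : ℝ) : ℝ :=
  sInf {r : ℝ | ∃ h : Ω → ℝ, varPi π h = 1 ∧ suppMass π h ≤ ε ∧ r = dirForm π P h}

/-! Truncating `u` at level `M = Var_π(u)/(4‖u‖₁)` costs little. By Markov's inequality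
`û = (u − M)₊` lives on a set of mass at most `‖u‖₁/M`. Truncation is 1-Lipschitz, so it can only
decrease the Dirichlet form. Since `(u − M)₊² ≥ u² − 2Mu` pointwise while `E_π û ≤ E_π u`, the
variance drops by at most `2M‖u‖₁ = Var_π(u)/2`. Normalizing `û` then gives a competitor for `Λ`. -/

section

variable (π : Ω → ℝ)

lemma varPi_eq_sum_sq_sub_sq (hπsum : ∑ x, π x = 1) (h : Ω → ℝ) :
    varPi π h = ∑ x, π x * h x ^ 2 - (∑ x, π x * h x) ^ 2 := by
  unfold varPi
  set m := ∑ y, π y * h y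
  have expand : ∀ x,
      π x * (h x - m) ^ 2 = π x * h x ^ 2 - 2 * m * (π x * h x) + m ^ 2 * π x :=
    fun x => by ring
  simp only [expand, Finset.sum_add_distrib, Finset.sum_sub_distrib, ← Finset.mul_sum, hπsum]
  ring

lemma varPi_const_mul (c : ℝ) (h : Ω → ℝ) :
    varPi π (fun x => c * h x) = c ^ 2 * varPi π h := by
  have mean : ∑ y, π y * (c * h y) = c * ∑ y, π y * h y := by
    rw [Finset.mul_sum]; exact Finset.sum_congr rfl fun x _ => by ring
  unfold varPi
  rw [mean, Finset.mul_sum _ _ (c ^ 2)]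
  exact Finset.sum_congr rfl fun x _ => by ring

lemma suppMass_const_mul {c : ℝ} (hc : c ≠ 0) (h : Ω → ℝ) :
    suppMass π (fun x => c * h x) = suppMass π h := by
  simp only [suppMass, ne_eq, mul_eq_zero, hc, false_or]

lemma l1Norm_pos (hπ : ∀ x, 0 < π x) {u : Ω → ℝ} (hu : u ≠ 0) : 0 < l1Norm π u := by
  obtain ⟨x₀, hx₀⟩ := Function.ne_iff.mp hu
  exact Finset.sum_pos' (fun x _ => mul_nonneg (hπ x).le (abs_nonneg _))
    ⟨x₀, Finset.mem_univ _, mul_pos (hπ x₀) (abs_pos.mpr hx₀)⟩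

lemma l1Norm_eq_sum_of_nonneg {u : Ω → ℝ} (hu : ∀ x, 0 ≤ u x) :
    l1Norm π u = ∑ x, π x * u x :=
  Finset.sum_congr rfl fun x _ => by rw [abs_of_nonneg (hu x)]

lemma suppMass_posPart_sub_le (hπ : ∀ x, 0 ≤ π x) (u : Ω → ℝ) {M : ℝ} (hM : 0 < M) :
    suppMass π (fun x => max (u x - M) 0) ≤ l1Norm π u / M := by
  rw [l1Norm, Finset.sum_div]
  refine Finset.sum_le_sum fun x _ => ?_
  split_ifs with hx
  · have hMu : M ≤ |u x| := by
      by_contra! hlt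
      exact hx (max_eq_right (by linarith [le_abs_self (u x)]))
    rw [le_div_iff₀ hM]
    exact mul_le_mul_of_nonneg_left hMu (hπ x)
  · exact div_nonneg (mul_nonneg (hπ x) (abs_nonneg _)) hM.le

lemma sq_sub_sq_posPart_sub_le {t M : ℝ} (ht : 0 ≤ t) (hM : 0 ≤ M) :
    t ^ 2 - max (t - M) 0 ^ 2 ≤ 2 * M * t := by
  rcases le_total t M with htM | hMt
  · rw [max_eq_right (by linarith)]; nlinarith
  · rw [max_eq_left (by linarith)]; nlinarith

lemma varPi_sub_le_varPi_posPart_sub (hπ : ∀ x, 0 ≤ π x) (hπsum : ∑ x, π x = 1)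
    {u : Ω → ℝ} (hu : ∀ x, 0 ≤ u x) {M : ℝ} (hM : 0 ≤ M) :
    varPi π u - 2 * M * l1Norm π u ≤ varPi π (fun x => max (u x - M) 0) := by
  set û : Ω → ℝ := fun x => max (u x - M) 0
  have second_moment :
      ∑ x, π x * u x ^ 2 - 2 * M * ∑ x, π x * u x ≤ ∑ x, π x * û x ^ 2 := by
    rw [sub_le_iff_le_add, Finset.mul_sum, ← Finset.sum_add_distrib]
    refine Finset.sum_le_sum fun x _ => ?_
    nlinarith [mul_le_mul_of_nonneg_left (sq_sub_sq_posPart_sub_le (hu x) hM) (hπ x)]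
  have mean_sq : (∑ x, π x * û x) ^ 2 ≤ (∑ x, π x * u x) ^ 2 := by
    refine pow_le_pow_left₀ (Finset.sum_nonneg fun x _ => mul_nonneg (hπ x) (le_max_right _ _))
      (Finset.sum_le_sum fun x _ => mul_le_mul_of_nonneg_left ?_ (hπ x)) 2
    exact max_le (by linarith) (hu x)
  rw [varPi_eq_sum_sq_sub_sq π hπsum, varPi_eq_sum_sq_sub_sq π hπsum,
    l1Norm_eq_sum_of_nonneg π hu]
  linarith

variable (P : Matrix Ω Ω ℝ)

lemma dirForm_const_mul (c : ℝ) (h : Ω → ℝ) :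
    dirForm π P (fun x => c * h x) = c ^ 2 * dirForm π P h := by
  simp only [dirForm, Finset.mul_sum]
  exact Finset.sum_congr rfl fun x _ => Finset.sum_congr rfl fun y _ => by ring

lemma dirForm_nonneg (hπ : ∀ x, 0 ≤ π x) (hP : ∀ x y, 0 ≤ P x y) (h : Ω → ℝ) :
    0 ≤ dirForm π P h :=
  mul_nonneg (by norm_num) (Finset.sum_nonneg fun x _ => Finset.sum_nonneg fun y _ =>
    mul_nonneg (mul_nonneg (hπ x) (hP x y)) (sq_nonneg _))

lemma dirForm_comp_le (hπ : ∀ x, 0 ≤ π x) (hP : ∀ x y, 0 ≤ P x y) {φ : ℝ → ℝ}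
    (hφ : LipschitzWith 1 φ) (h : Ω → ℝ) :
    dirForm π P (fun x => φ (h x)) ≤ dirForm π P h := by
  refine mul_le_mul_of_nonneg_left (Finset.sum_le_sum fun x _ => Finset.sum_le_sum fun y _ =>
    mul_le_mul_of_nonneg_left (sq_le_sq.mpr ?_) (mul_nonneg (hπ x) (hP x y))) (by norm_num)
  simpa only [Real.dist_eq, NNReal.coe_one, one_mul] using hφ.dist_le_mul (h x) (h y)

lemma specProfile_le_div (hπ : ∀ x, 0 ≤ π x) (hP : ∀ x y, 0 ≤ P x y) {h : Ω → ℝ}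
    (hvar : 0 < varPi π h) {ε : ℝ} (hsupp : suppMass π h ≤ ε) :
    specProfile π P ε ≤ dirForm π P h / varPi π h := by
  set c := (√(varPi π h))⁻¹
  have hc : c ^ 2 = (varPi π h)⁻¹ := by rw [inv_pow, Real.sq_sqrt hvar.le]
  have hc0 : c ≠ 0 := inv_ne_zero (Real.sqrt_pos.mpr hvar).ne'
  refine csInf_le ⟨0, ?_⟩ ⟨fun x => c * h x, ?_, ?_, ?_⟩
  · rintro r ⟨g, -, -, rfl⟩
    exact dirForm_nonneg π P hπ hP g
  · rw [varPi_const_mul, hc, inv_mul_cancel₀ hvar.ne']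
  · rwa [suppMass_const_mul π hc0]
  · rw [dirForm_const_mul, hc, inv_mul_eq_div]

end

theorem stmt3_general (π : Ω → ℝ) (hπpos : ∀ x, 0 < π x) (hπsum : ∑ x, π x = 1)
    (P : Matrix Ω Ω ℝ) (hP0 : ∀ x y, 0 ≤ P x y)
    (u : Ω → ℝ) (hu0 : ∀ x, 0 ≤ u x) (hune : u ≠ 0) (huvar : 0 < varPi π u) :
    (suppMass π (fun x => max (u x - varPi π u / (4 * l1Norm π u)) 0)
        ≤ 4 * (l1Norm π u) ^ 2 / varPi π u) ∧
    (dirForm π P (fun x => max (u x - varPi π u / (4 * l1Norm π u)) 0) ≤ dirForm π P u) ∧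
    (varPi π u / 2 ≤ varPi π (fun x => max (u x - varPi π u / (4 * l1Norm π u)) 0)) ∧
    ((1 / 2) * specProfile π P (4 * (l1Norm π u) ^ 2 / varPi π u)
        ≤ dirForm π P u / varPi π u) := by
  have hπ : ∀ x, 0 ≤ π x := fun x => (hπpos x).le
  have hL : 0 < l1Norm π u := l1Norm_pos π hπpos hune
  set V := varPi π u
  set M := V / (4 * l1Norm π u) with hMdef
  set û : Ω → ℝ := fun x => max (u x - M) 0
  have hM : 0 < M := by positivity
  have supp : suppMass π û ≤ 4 * l1Norm π u ^ 2 / V :=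
    (suppMass_posPart_sub_le π hπ u hM).trans_eq (by rw [hMdef]; field_simp)
  have dir : dirForm π P û ≤ dirForm π P u :=
    dirForm_comp_le π P hπ hP0 ((IsometryEquiv.subRight M).isometry.lipschitz.max_const 0) u
  have var : V / 2 ≤ varPi π û := by
    have hloss : 2 * M * l1Norm π u = V / 2 := by rw [hMdef]; field_simp; ring
    linarith [varPi_sub_le_varPi_posPart_sub π hπ hπsum hu0 hM.le]
  refine ⟨supp, dir, var, ?_⟩
  calc 1 / 2 * specProfile π P (4 * l1Norm π u ^ 2 / V)
      ≤ 1 / 2 * (dirForm π P û / varPi π û) := by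
        gcongr; exact specProfile_le_div π P hπ hP0 (by linarith) supp
    _ ≤ 1 / 2 * (dirForm π P u / (V / 2)) := by
        gcongr 1 / 2 * ?_
        exact div_le_div₀ (dirForm_nonneg π P hπ hP0 u) dir (by positivity) var
    _ = dirForm π P u / V := by field_simp

/-- the spectral-profile lemma of Goel–Montenegro–Tetali, Proposition 2.2.
For a reversible chain `(P, π)` and any nonzero nonnegative `u` (with `Var_π u > 0`), setting
`M = Var_π(u)/(4‖u‖₁)` and `û = (u − M)₊`:
`π(supp û) ≤ 4‖u‖₁²/Var_π(u)`, `E(u,u) ≥ E(û,û)`, `Var_π(û) ≥ Var_π(u)/2`, and consequently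
`E(u,u)/Var_π(u) ≥ (1/2)·Λ(4‖u‖₁²/Var_π(u))`. -/
theorem stmt3 (π : Ω → ℝ) (hπpos : ∀ x, 0 < π x) (hπsum : ∑ x, π x = 1)
    (P : Matrix Ω Ω ℝ) (hP0 : ∀ x y, 0 ≤ P x y) (hP1 : ∀ x, ∑ y, P x y = 1)
    (hrev : ∀ x y, π x * P x y = π y * P y x)
    (u : Ω → ℝ) (hu0 : ∀ x, 0 ≤ u x) (hune : u ≠ 0) (huvar : 0 < varPi π u) :
    (suppMass π (fun x => max (u x - varPi π u / (4 * l1Norm π u)) 0)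
        ≤ 4 * (l1Norm π u) ^ 2 / varPi π u) ∧
    (dirForm π P (fun x => max (u x - varPi π u / (4 * l1Norm π u)) 0) ≤ dirForm π P u) ∧
    (varPi π u / 2 ≤ varPi π (fun x => max (u x - varPi π u / (4 * l1Norm π u)) 0)) ∧
    ((1 / 2) * specProfile π P (4 * (l1Norm π u) ^ 2 / varPi π u)
        ≤ dirForm π P u / varPi π u) :=
  stmt3_general π hπpos hπsum P hP0 u hu0 hune huvar

end
end

section
/- Let (Y_k) be an irreducible discrete-time Markov chain on a finite state space Ω, reversible with respect to π, and let t_stop be the maximal over starting states x of the minimal expected value of a randomized stopping time T with P_x(X_T = y) = π(y) for all y (a 'stationary stopping time'). Then for every subset A ⊆ Ω, max_{x∈Ω} E_x[T_A] ≤ E_π[T_A] + t_stop, where T_A is the hitting time of A and E_π[T_A] = Σ_x π(x)E_x[T_A]. -/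
/-!
The stationary stopping time from `x` enters only through its exit frequencies `ρ`, which
satisfy `ρ (I - P) = δₓ - π`. Pairing this identity with `t_A` gives
`t_A x - E_π[T_A] = ⟨ρ, (I - P) t_A⟩`, and `(I - P) t_A ≤ 1` pointwise (it equals `1` off `A`
and is `≤ 0` on `A`), so the difference is at most `Σ ρ ≤ t_stop`.
-/

noncomputable section

variable {Ω : Type*} [Fintype Ω] [DecidableEq Ω]

open Matrix

section
variable {ι R : Type*} [Fintype ι] [CommRing R] [LinearOrder R] [IsStrictOrderedRing R]

theorem hittingTime_sub_mulVec_le_one {P : Matrix ι ι R} (hP : ∀ x y, 0 ≤ P x y)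
    {A : Finset ι} {f : ι → R} (hA : ∀ x ∈ A, f x = 0) (hf : 0 ≤ f)
    (hrec : ∀ x ∉ A, f x = 1 + (P *ᵥ f) x) (x : ι) :
    f x - (P *ᵥ f) x ≤ 1 := by
  by_cases hx : x ∈ A
  · have hPf : 0 ≤ (P *ᵥ f) x := Finset.sum_nonneg fun y _ => mul_nonneg (hP x y) (hf y)
    rw [hA x hx]
    linarith
  · rw [hrec x hx]
    simp

theorem apply_le_dotProduct_add_sum_of_sub_vecMul_eq [DecidableEq ι] {P : Matrix ι ι R}
    {x : ι} {π ρ f : ι → R} (hρ0 : 0 ≤ ρ) (hρ : ρ - ρ ᵥ* P = Pi.single x 1 - π)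
    (hf : ∀ z, f z - (P *ᵥ f) z ≤ 1) :
    f x ≤ π ⬝ᵥ f + ∑ z, ρ z := by
  have hpair : f x - π ⬝ᵥ f ≤ ∑ z, ρ z :=
    calc f x - π ⬝ᵥ f = (Pi.single x 1 - π) ⬝ᵥ f := by
          rw [sub_dotProduct, single_one_dotProduct]
      _ = ρ ⬝ᵥ (f - P *ᵥ f) := by
          rw [← hρ, sub_dotProduct, dotProduct_sub, dotProduct_mulVec]
      _ ≤ ∑ z, ρ z :=
          Finset.sum_le_sum fun z _ => mul_le_of_le_one_right (hρ0 z) (hf z)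
  linarith

end

theorem stmt14_general (P : Matrix Ω Ω ℝ)
    (hP0 : ∀ x y, 0 ≤ P x y)
    (π : Ω → ℝ)
    (tstop : ℝ)
    (hstop : ∀ x : Ω, ∃ ρ : Ω → ℝ, (∀ y, 0 ≤ ρ y) ∧
      (∀ y, ρ y - ∑ z, ρ z * P z y = (if y = x then (1 : ℝ) else 0) - π y) ∧
      ∑ y, ρ y ≤ tstop)
    (A : Finset Ω) (tA : Ω → ℝ)
    (htA0 : ∀ x ∈ A, tA x = 0)
    (htAnonneg : ∀ x, 0 ≤ tA x)
    (htArec : ∀ x ∉ A, tA x = 1 + ∑ y, P x y * tA y) :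
    ∀ x : Ω, tA x ≤ (∑ y, π y * tA y) + tstop := by
  intro x
  obtain ⟨ρ, hρ0, hρ, hρsum⟩ := hstop x
  have hexit : ρ - ρ ᵥ* P = Pi.single x 1 - π := funext fun y => by
    rw [Pi.sub_apply, Pi.sub_apply, Pi.single_apply]
    exact hρ y
  have hdrift := hittingTime_sub_mulVec_le_one hP0 htA0 htAnonneg htArec
  have hbound := apply_le_dotProduct_add_sum_of_sub_vecMul_eq hρ0 hexit hdrift
  exact hbound.trans (add_le_add_right hρsum _)

/-- Lemma 4.4. Let `P` be an irreducible transition matrix on a finite state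
space, reversible w.r.t. `π`. Let `tstop` bound, for every starting state `x`, the minimal mean
of a randomized stationary stopping time from `x`; by the Lovász–Winkler exit-frequency
characterization, this means: for every `x` there is an occupation vector `ρ ≥ 0` with
`ρ(I − P) = δ_x − π` and total mass `Σ ρ ≤ tstop`. Let `tA x = E_x[T_A]` be the expected
hitting times of a set `A`, characterized as the nonnegative solution of `tA = 0` on `A` and
`tA x = 1 + Σ_y P(x,y) tA y` off `A`. Then `max_x E_x[T_A] ≤ E_π[T_A] + tstop`. -/
theorem stmt14 (P : Matrix Ω Ω ℝ)
    (hP0 : ∀ x y, 0 ≤ P x y) (hP1 : ∀ x, ∑ y, P x y = 1)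
    (hirr : ∀ x y, ∃ n : ℕ, 0 < (P ^ n) x y)
    (π : Ω → ℝ) (hπpos : ∀ x, 0 < π x) (hπsum : ∑ x, π x = 1)
    (hrev : ∀ x y, π x * P x y = π y * P y x)
    (tstop : ℝ)
    (hstop : ∀ x : Ω, ∃ ρ : Ω → ℝ, (∀ y, 0 ≤ ρ y) ∧
      (∀ y, ρ y - ∑ z, ρ z * P z y = (if y = x then (1 : ℝ) else 0) - π y) ∧
      ∑ y, ρ y ≤ tstop)
    (A : Finset Ω) (tA : Ω → ℝ)
    (htA0 : ∀ x ∈ A, tA x = 0)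
    (htAnonneg : ∀ x, 0 ≤ tA x)
    (htArec : ∀ x ∉ A, tA x = 1 + ∑ y, P x y * tA y) :
    ∀ x : Ω, tA x ≤ (∑ y, π y * tA y) + tstop :=
  stmt14_general P hP0 π tstop hstop A tA htA0 htAnonneg htArec

end
end

section
/- Let G = (V,E) be a finite connected vertex-transitive graph with diameter γ, satisfying (c,a)-moderate growth: every ball of radius r has at least c·|V|·(r/γ)^a vertices. Fix o ∈ V, let X, Y be independent uniform on V, and let f: V → R satisfy |f(x) − d_G(x,o)| ≤ N for all x, where 0 ≤ N ≤ γ/4 and d_G is graph distance. Then Var(f(X)) ≥ c₁(a,c)·(γ − 4N)², where c₁(a,c) > 0 depends only on a and c. -/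
/-!
Either the mean `m` of `f` lies above the midpoint of `γ/4 + N` and `3γ/4 - N`, and then `f`
falls below `m` by at least `(γ - 4N)/4` on the ball of radius `γ/4` around `o`; or it lies below,
and then `f` exceeds `m` by that much on the ball of radius `γ/4` around a vertex `z` at distance
`γ` from `o`, which exists by vertex transitivity. Moderate growth gives both balls at least
`c·4^{-a}·|V|` vertices.
-/

open Finset

namespace SimpleGraph

variable {V W : Type*} {G : SimpleGraph V} {G' : SimpleGraph W} {u v : V}

lemma Reachable.dist_map_le (f : G →g G') (h : G.Reachable u v) :
    G'.dist (f u) (f v) ≤ G.dist u v := by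
  obtain ⟨p, hp⟩ := h.exists_walk_length_eq_dist
  calc G'.dist (f u) (f v) ≤ (p.map f).length := dist_le _
    _ = G.dist u v := by rw [Walk.length_map, hp]

lemma Iso.dist_map (φ : G ≃g G') (u v : V) : G'.dist (φ u) (φ v) = G.dist u v := by
  by_cases h : G.Reachable u v
  · refine le_antisymm (h.dist_map_le φ.toHom) ?_
    simpa using (h.map φ.toHom).dist_map_le φ.symm.toHom
  · rw [dist_eq_zero_of_not_reachable h,
      dist_eq_zero_of_not_reachable (Iso.reachable_iff.not.mpr h)]

lemma exists_dist_eq_of_forall_exists_iso (htrans : ∀ x y : V, ∃ φ : G ≃g G, φ x = y)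
    (o u v : V) : ∃ z, G.dist o z = G.dist u v := by
  obtain ⟨φ, rfl⟩ := htrans u o
  exact ⟨φ v, φ.dist_map u v⟩

lemma Connected.sub_le_dist_of_dist_le (hG : G.Connected) {o z y : V} {r : ℝ}
    (hzy : (G.dist z y : ℝ) ≤ r) : (G.dist o z : ℝ) - r ≤ G.dist o y := by
  have htri : (G.dist o z : ℝ) ≤ G.dist o y + G.dist y z := by
    exact_mod_cast hG.dist_triangle
  rw [dist_comm (u := y)] at htri
  linarith

end SimpleGraph

lemma mul_sq_half_sub_le_sum_sq_sub {ι : Type*} [Fintype ι] (g : ι → ℝ) (m : ℝ)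
    {α β k : ℝ} {A B : Finset ι} (hαβ : α ≤ β) (hA : k ≤ #A) (hB : k ≤ #B)
    (hgA : ∀ x ∈ A, g x ≤ α) (hgB : ∀ x ∈ B, β ≤ g x) :
    k * ((β - α) / 2) ^ 2 ≤ ∑ x, (g x - m) ^ 2 := by
  have hδ : 0 ≤ (β - α) / 2 := by linarith
  have key : ∀ S : Finset ι, k ≤ #S → (∀ x ∈ S, (β - α) / 2 ≤ |g x - m|) →
      k * ((β - α) / 2) ^ 2 ≤ ∑ x, (g x - m) ^ 2 := by
    intro S hS hgS
    calc k * ((β - α) / 2) ^ 2 ≤ #S • ((β - α) / 2) ^ 2 := by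
          rw [nsmul_eq_mul]; gcongr
      _ ≤ ∑ x ∈ S, (g x - m) ^ 2 :=
          card_nsmul_le_sum _ _ _ fun x hx ↦ by
            rw [← sq_abs (g x - m)]; gcongr; exact hgS x hx
      _ ≤ ∑ x, (g x - m) ^ 2 := sum_le_univ_sum_of_nonneg fun x ↦ sq_nonneg _
  rcases le_or_gt ((α + β) / 2) m with hm | hm
  · exact key A hA fun x hx ↦ by
      rw [abs_sub_comm]; exact le_abs.mpr (Or.inl (by linarith [hgA x hx]))
  · exact key B hB fun x hx ↦ le_abs.mpr (Or.inl (by linarith [hgB x hx]))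

theorem stmt16_general (a c : ℝ) (hc : 0 < c) :
    ∃ c₁ : ℝ, 0 < c₁ ∧
      ∀ (V : Type) (_ : Fintype V) (_ : DecidableEq V) (G : SimpleGraph V)
        (_ : DecidableRel G.Adj),
        G.Connected →
        (∀ x y : V, ∃ φ : G ≃g G, φ x = y) →
        ∀ γ : ℕ,
        (∀ x y : V, G.dist x y ≤ γ) →
        (∃ x y : V, G.dist x y = γ) →
        (∀ (x : V) (r : ℝ), 0 < r → r ≤ γ →
          c * (Fintype.card V : ℝ) * (r / γ) ^ a
            ≤ ((Finset.univ.filter fun y => (G.dist x y : ℝ) ≤ r).card : ℝ)) →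
        ∀ (o : V) (f : V → ℝ) (N : ℝ), 0 ≤ N → 4 * N ≤ (γ : ℝ) →
        (∀ x : V, |f x - (G.dist o x : ℝ)| ≤ N) →
        c₁ * ((γ : ℝ) - 4 * N) ^ 2 ≤
          (1 / Fintype.card V) * ∑ x : V,
            (f x - (1 / Fintype.card V) * ∑ y : V, f y) ^ 2 := by
  refine ⟨c * (1 / 4 : ℝ) ^ a / 16, by positivity, ?_⟩
  intro V _ _ G _ hG htrans γ _ ⟨u, v, huv⟩ hgrowth o f N hN h4N hf
  rcases Nat.eq_zero_or_pos γ with rfl | hγ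
  · obtain rfl : N = 0 := by push_cast at h4N; linarith
    simp only [CharP.cast_eq_zero, mul_zero, sub_zero, ne_eq, OfNat.ofNat_ne_zero,
      not_false_eq_true, zero_pow]
    positivity
  have hγ' : (0 : ℝ) < γ := by exact_mod_cast hγ
  have hquarter : (γ / 4 : ℝ) / γ = 1 / 4 := by field_simp
  obtain ⟨z, hz⟩ := G.exists_dist_eq_of_forall_exists_iso htrans o u v
  have hball := fun x ↦ hquarter ▸ hgrowth x (γ / 4) (by positivity) (by linarith)
  have hsum := mul_sq_half_sub_le_sum_sq_sub f ((1 / Fintype.card V) * ∑ y, f y)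
    (α := γ / 4 + N) (β := 3 * γ / 4 - N) (by linarith) (hball o) (hball z)
    (fun x hx ↦ by linarith [(abs_le.mp (hf x)).2, (mem_filter.mp hx).2])
    (fun x hx ↦ by
      have hfar := hG.sub_le_dist_of_dist_le (o := o) (mem_filter.mp hx).2
      rw [hz, huv] at hfar
      linarith [(abs_le.mp (hf x)).1])
  have hV : (0 : ℝ) < Fintype.card V := by
    have := hG.nonempty; exact_mod_cast Fintype.card_pos
  calc c * (1 / 4 : ℝ) ^ a / 16 * (γ - 4 * N) ^ 2
      = 1 / Fintype.card V * (c * Fintype.card V * (1 / 4) ^ a *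
          ((3 * γ / 4 - N - (γ / 4 + N)) / 2) ^ 2) := by field_simp; ring
    _ ≤ _ := by gcongr

/-- variance lower bound in Lemma 7.1. Fix `a, c > 0`. There is a constant
`c₁ = c₁(a,c) > 0` such that: for every finite connected vertex-transitive graph `G = (V,E)`
with diameter `γ` and `(c,a)`-moderate growth (every ball of radius `r ∈ (0,γ]` contains at
least `c·|V|·(r/γ)^a` vertices), every `o ∈ V`, every `f : V → ℝ` with
`|f(x) − d_G(x,o)| ≤ N` for all `x`, where `0 ≤ N` and `4N ≤ γ`, the variance of `f` under the
uniform measure satisfies `Var(f(X)) ≥ c₁·(γ − 4N)²`. -/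
theorem stmt16 (a c : ℝ) (ha : 0 < a) (hc : 0 < c) :
    ∃ c₁ : ℝ, 0 < c₁ ∧
      ∀ (V : Type) (_ : Fintype V) (_ : DecidableEq V) (G : SimpleGraph V)
        (_ : DecidableRel G.Adj),
        G.Connected →
        (∀ x y : V, ∃ φ : G ≃g G, φ x = y) →
        ∀ γ : ℕ,
        (∀ x y : V, G.dist x y ≤ γ) →
        (∃ x y : V, G.dist x y = γ) →
        (∀ (x : V) (r : ℝ), 0 < r → r ≤ γ →
          c * (Fintype.card V : ℝ) * (r / γ) ^ a
            ≤ ((Finset.univ.filter fun y => (G.dist x y : ℝ) ≤ r).card : ℝ)) →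
        ∀ (o : V) (f : V → ℝ) (N : ℝ), 0 ≤ N → 4 * N ≤ (γ : ℝ) →
        (∀ x : V, |f x - (G.dist o x : ℝ)| ≤ N) →
        c₁ * ((γ : ℝ) - 4 * N) ^ 2 ≤
          (1 / Fintype.card V) * ∑ x : V,
            (f x - (1 / Fintype.card V) * ∑ y : V, f y) ^ 2 :=
  stmt16_general a c hc
end

section
/- Let J_t = e^{t(P−I)} be the continuous-time semigroup of an irreducible Markov chain on a finite state space V with transition matrix P satisfying 1 − P(x,x) ∈ [p/2, 2e²p] for all x ∈ V, where p ∈ (0,1). Then there exists a universal constant δ₀ ∈ (0,1) (independent of p and V) such that for s = 1/p and all x, y ∈ V, J_s(x,y) ≤ 1 − δ₀. -/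
/-!
Write `J_t = e^{-t} e^{tP}`: it is the mixture of the powers `P^k` with Poisson(`t`) weights, hence
row stochastic. The diagonal entry `f(t) = J_t(x,x)` satisfies `f' = -q f + ∑_{z ≠ x} J_t(x,z) P(z,x)`
with `q = 1 - P(x,x)`, and the sum lies between `0` and `b (1 - f)` when every off-diagonal
`P(z,x)` is at most `b`. Grönwall's inequality then gives `e^{-qt} ≤ f(t)` and
`1 - f(t) ≥ q/(q+b) · (1 - e^{-(q+b)t})`. With `q ∈ [p/2, 2e²p]`, `b = 2e²p` and `t = 1/p` both
bounds are uniform in `p`: the first keeps `J(x,x)` away from `0`, hence every `J(x,y)`,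
`y ≠ x`, away from `1`, and the second keeps `J(x,x)` away from `1`.
-/

open NormedSpace Matrix Finset Set
open scoped Nat

lemma le_gronwallBound_of_hasDerivAt {f f' : ℝ → ℝ} {δ K ε a b : ℝ}
    (hf : ∀ t, HasDerivAt f (f' t) t) (ha : f a ≤ δ)
    (bound : ∀ t ∈ Ico a b, f' t ≤ K * f t + ε) :
    ∀ t ∈ Icc a b, f t ≤ gronwallBound δ K ε (t - a) :=
  le_gronwallBound_of_liminf_deriv_right_le
    (continuous_iff_continuousAt.2 fun t => (hf t).continuousAt).continuousOn
    (fun t _ _ hr => (hf t).hasDerivWithinAt.liminf_right_slope_le hr) ha bound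

namespace Matrix

variable {n : Type*} [Fintype n] [DecidableEq n]

section StochasticDiagonal

variable {R : Type*} [CommRing R]

lemma mul_sub_one_apply_self (M P : Matrix n n R) (i : n) :
    (M * (P - 1)) i i = ∑ k ∈ univ.erase i, M i k * P k i - (1 - P i i) * M i i := by
  rw [mul_sub, mul_one, sub_apply, mul_apply, ← add_sum_erase _ _ (mem_univ i)]
  ring

variable [LinearOrder R] [IsStrictOrderedRing R]

lemma apply_le_one_sub_apply_self {M : Matrix n n R} (hM : M ∈ rowStochastic R n) {i j : n}
    (hij : i ≠ j) : M i j ≤ 1 - M i i := by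
  have h := sum_le_sum_of_subset_of_nonneg (subset_univ {i, j})
    fun k _ _ => nonneg_of_mem_rowStochastic hM (i := i) (j := k)
  rw [sum_pair hij, sum_row_of_mem_rowStochastic hM] at h
  linarith

lemma neg_mul_le_mul_sub_one_apply_self {M P : Matrix n n R} (hM : ∀ i j, 0 ≤ M i j)
    (hP : ∀ i j, 0 ≤ P i j) (i : n) :
    -(1 - P i i) * M i i ≤ (M * (P - 1)) i i := by
  rw [mul_sub_one_apply_self]
  have := sum_nonneg fun k (_ : k ∈ univ.erase i) => mul_nonneg (hM i k) (hP k i)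
  linarith

lemma mul_sub_one_apply_self_le {M P : Matrix n n R} (hM : M ∈ rowStochastic R n) {i : n}
    {b : R} (hb : ∀ k ≠ i, P k i ≤ b) :
    (M * (P - 1)) i i ≤ -(1 - P i i + b) * M i i + b := by
  have hsum : ∑ k ∈ univ.erase i, M i k = 1 - M i i := by
    rw [← sum_row_of_mem_rowStochastic hM i, ← add_sum_erase _ _ (mem_univ i)]
    ring
  have : ∑ k ∈ univ.erase i, M i k * P k i ≤ ∑ k ∈ univ.erase i, M i k * b :=
    sum_le_sum fun k hk =>
      mul_le_mul_of_nonneg_left (hb k (ne_of_mem_erase hk)) (nonneg_of_mem_rowStochastic hM)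
  rw [← sum_mul, hsum] at this
  rw [mul_sub_one_apply_self]
  linarith

end StochasticDiagonal

section MarkovSemigroup

-- Any normed algebra structure will do: on a finite type it induces the product topology.
attribute [local instance] Matrix.linftyOpSemiNormedRing Matrix.linftyOpNormedRing
  Matrix.linftyOpNormedAlgebra

lemma exp_smul_sub_one (P : Matrix n n ℝ) (t : ℝ) :
    exp (t • (P - 1)) = Real.exp (-t) • exp (t • P) := by
  have hsplit : t • (P - 1) = algebraMap ℝ (Matrix n n ℝ) (-t) + t • P := by
    rw [Algebra.algebraMap_eq_smul_one, smul_sub]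
    module
  rw [hsplit]
  refine (NormedSpace.exp_add_of_commute (Algebra.commute_algebraMap_left _ _)).trans ?_
  rw [← algebraMap_exp_comm, ← Real.exp_eq_exp_ℝ, ← Algebra.smul_def]
  rfl

lemma hasSum_exp_smul_sub_one (P : Matrix n n ℝ) (t : ℝ) :
    HasSum (fun k : ℕ => (Real.exp (-t) * t ^ k / k !) • P ^ k) (exp (t • (P - 1))) := by
  have hterm : (fun k : ℕ => (Real.exp (-t) * t ^ k / k !) • P ^ k) =
      fun k => Real.exp (-t) • ((k !⁻¹ : ℝ) • (t • P) ^ k) := by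
    funext k
    rw [smul_pow, smul_smul, smul_smul]
    ring_nf
  rw [exp_smul_sub_one, hterm]
  exact (exp_series_hasSum_exp' (t • P)).const_smul _

lemma exp_smul_sub_one_mem_rowStochastic {P : Matrix n n ℝ} (hP : P ∈ rowStochastic ℝ n)
    {t : ℝ} (ht : 0 ≤ t) : exp (t • (P - 1)) ∈ rowStochastic ℝ n := by
  have hJ := hasSum_exp_smul_sub_one P t
  have hw : HasSum (fun k : ℕ => Real.exp (-t) * t ^ k / k !) 1 :=
    ProbabilityTheory.hasSum_one_poissonMeasure ⟨t, ht⟩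
  have hentry (i j : n) := Pi.hasSum.1 (Pi.hasSum.1 hJ i) j
  simp only [Matrix.smul_apply, smul_eq_mul] at hentry
  refine mem_rowStochastic_iff_sum.2 ⟨fun i j => (hentry i j).nonneg fun k => ?_, fun i => ?_⟩
  · have := nonneg_of_mem_rowStochastic (pow_mem hP k) (i := i) (j := j)
    positivity
  · refine (hasSum_sum fun j _ => hentry i j).unique ?_
    simpa only [← mul_sum, sum_row_of_mem_rowStochastic (pow_mem hP _), mul_one] using hw

lemma hasDerivAt_exp_smul_apply (A : Matrix n n ℝ) (i j : n) (t : ℝ) :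
    HasDerivAt (fun u : ℝ => exp (u • A) i j) ((exp (t • A) * A) i j) t :=
  ((entryLinearMap ℝ ℝ i j).toContinuousLinearMap.hasFDerivAt.comp_hasDerivAt t
    (hasDerivAt_exp_smul_const A t) :)

lemma exp_neg_mul_le_exp_smul_sub_one_apply_self {P : Matrix n n ℝ}
    (hP : P ∈ rowStochastic ℝ n) {t : ℝ} (ht : 0 ≤ t) (i : n) :
    Real.exp (-((1 - P i i) * t)) ≤ exp (t • (P - 1)) i i := by
  have h := le_gronwallBound_of_hasDerivAt (f := fun u => -exp (u • (P - 1)) i i)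
    (fun u => (hasDerivAt_exp_smul_apply (P - 1) i i u).neg) (δ := -1) (K := -(1 - P i i))
    (ε := 0) (a := 0) (b := t) (by simp) (fun u hu => ?_) t ⟨ht, le_rfl⟩
  · rwa [gronwallBound_ε0, sub_zero, neg_one_mul, neg_mul, neg_le_neg_iff] at h
  · have := neg_mul_le_mul_sub_one_apply_self
      (mem_rowStochastic.1 (exp_smul_sub_one_mem_rowStochastic hP hu.1)).1
      (mem_rowStochastic.1 hP).1 i
    linarith

lemma exp_smul_sub_one_apply_self_le {P : Matrix n n ℝ} (hP : P ∈ rowStochastic ℝ n) {i : n}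
    {b : ℝ} (hb0 : 0 < b) (hb : ∀ k ≠ i, P k i ≤ b) {t : ℝ} (ht : 0 ≤ t) :
    exp (t • (P - 1)) i i ≤
      1 - (1 - P i i) / (1 - P i i + b) * (1 - Real.exp (-((1 - P i i + b) * t))) := by
  have hqb : 0 < 1 - P i i + b := by linarith [le_one_of_mem_rowStochastic hP (i := i) (j := i)]
  have h := le_gronwallBound_of_hasDerivAt (f := fun u => exp (u • (P - 1)) i i)
    (hasDerivAt_exp_smul_apply (P - 1) i i) (δ := 1) (K := -(1 - P i i + b))
    (ε := b) (a := 0) (b := t) (by simp)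
    (fun u hu => mul_sub_one_apply_self_le (exp_smul_sub_one_mem_rowStochastic hP hu.1) hb)
    t ⟨ht, le_rfl⟩
  rw [gronwallBound_of_K_ne_0 (neg_ne_zero.2 hqb.ne'), sub_zero] at h
  refine h.trans_eq ?_
  field_simp
  ring

end MarkovSemigroup

end Matrix

lemma one_sub_exp_neg_half_div_le {p q c : ℝ} (hp : 0 < p) (hq : p / 2 ≤ q) (hc : 0 < c) :
    (1 - Real.exp (-(1 / 2))) / (1 + 2 * c) ≤
      q / (q + c * p) * (1 - Real.exp (-((q + c * p) * (1 / p)))) := by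
  have hq0 : 0 < q := by linarith
  have hratio : 1 / (1 + 2 * c) ≤ q / (q + c * p) := by
    rw [div_le_div_iff₀ (by positivity) (by positivity)]
    nlinarith
  have hexp : Real.exp (-((q + c * p) * (1 / p))) ≤ Real.exp (-(1 / 2)) := by
    rw [Real.exp_le_exp, neg_le_neg_iff, ← div_eq_mul_one_div, le_div_iff₀ hp]
    nlinarith
  have hhalf : 0 ≤ 1 - Real.exp (-(1 / 2)) := by
    rw [sub_nonneg, Real.exp_le_one_iff]
    norm_num
  calc (1 - Real.exp (-(1 / 2))) / (1 + 2 * c)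
      = 1 / (1 + 2 * c) * (1 - Real.exp (-(1 / 2))) := by ring
    _ ≤ q / (q + c * p) * (1 - Real.exp (-((q + c * p) * (1 / p)))) := by gcongr

/-- Lemma 6.4. There is a universal constant `δ₀ ∈ (0,1)` such that for every
finite state space `V`, every irreducible transition matrix `P` with holding probabilities
satisfying `1 − P(x,x) ∈ [p/2, 2e²p]` for all `x` (as for the auxiliary chain with parameters
`μ = 1, p`), the continuous-time semigroup `J_t = e^{t(P−I)}` satisfies
`J_s(x,y) ≤ 1 − δ₀` for `s = 1/p` and all `x, y`. -/
theorem stmt19 :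
    ∃ δ₀ : ℝ, 0 < δ₀ ∧ δ₀ < 1 ∧
      ∀ (V : Type) (_ : Fintype V) (_ : DecidableEq V) (_ : Nonempty V)
        (P : Matrix V V ℝ) (p : ℝ),
        0 < p → p < 1 →
        (∀ x y, 0 ≤ P x y) → (∀ x, ∑ y, P x y = 1) →
        (∀ x y, ∃ n : ℕ, 0 < (P ^ n) x y) →
        (∀ x : V, p / 2 ≤ 1 - P x x ∧ 1 - P x x ≤ 2 * Real.exp 1 ^ 2 * p) →
        ∀ x y : V,
          NormedSpace.exp ((1 / p) • (P - 1)) x y ≤ 1 - δ₀ := by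
  set c : ℝ := 2 * Real.exp 1 ^ 2
  have hc : 0 < c := by positivity
  have hhalf : 0 < 1 - Real.exp (-(1 / 2)) := by
    rw [sub_pos, Real.exp_lt_one_iff]
    norm_num
  refine ⟨min (Real.exp (-c)) ((1 - Real.exp (-(1 / 2))) / (1 + 2 * c)),
    lt_min (Real.exp_pos _) (by positivity),
    (min_le_left _ _).trans_lt (Real.exp_lt_one_iff.2 (neg_lt_zero.2 hc)), ?_⟩
  intro V _ _ _ P p hp _ hPnn hrow _ hhold x y
  have hP : P ∈ rowStochastic ℝ V := mem_rowStochastic_iff_sum.2 ⟨hPnn, hrow⟩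
  have hs : 0 ≤ 1 / p := by positivity
  rcases eq_or_ne x y with rfl | hxy
  · calc exp ((1 / p) • (P - 1)) x x
        ≤ 1 - (1 - P x x) / (1 - P x x + c * p) *
            (1 - Real.exp (-((1 - P x x + c * p) * (1 / p)))) :=
          exp_smul_sub_one_apply_self_le hP (by positivity)
            (fun k hk => (apply_le_one_sub_apply_self hP hk).trans (hhold k).2) hs
      _ ≤ _ := sub_le_sub_left
          ((min_le_right _ _).trans (one_sub_exp_neg_half_div_le hp (hhold x).1 hc)) 1
  · have hrate : (1 - P x x) * (1 / p) ≤ c := by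
      rw [← div_eq_mul_one_div, div_le_iff₀ hp]
      exact (hhold x).2
    calc exp ((1 / p) • (P - 1)) x y
        ≤ 1 - exp ((1 / p) • (P - 1)) x x :=
          apply_le_one_sub_apply_self (exp_smul_sub_one_mem_rowStochastic hP hs) hxy
      _ ≤ 1 - Real.exp (-((1 - P x x) * (1 / p))) :=
          sub_le_sub_left (exp_neg_mul_le_exp_smul_sub_one_apply_self hP hs x) 1
      _ ≤ _ := sub_le_sub_left
          ((min_le_left _ _).trans (Real.exp_le_exp.2 (neg_le_neg hrate))) 1
end
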